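/- arXiv:1707.03888 — 2 statements merged into one kernel-verified Lean document; each statement's English description precedes it below -/
import Mathlib

section
/- Let p, c ≥ 1 be integers, let G be a graph with at least 2 vertices, let H_0 be a graph with χ(H_0) = χ_f(H_0) = c, and let H be the p-blowup of H_0. If χ(G) ≥ p, then the tree-like product satisfies χ(T(G,H)) ≥ c·p. -/
open SimpleGraph

/-- `F` is a minor of `G`: branch decomposition formulation. -/
def IsMinor {α : Type*} {β : Type*} (F : SimpleGraph α) (G : SimpleGraph β) : Prop :=
  ∃ f : α → Set β,
    (∀ a, (f a).Nonempty) ∧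
    (∀ a, (G.induce (f a)).Connected) ∧
    (∀ a a', a ≠ a' → Disjoint (f a) (f a')) ∧
    ∀ ⦃a a'⦄, F.Adj a a' → ∃ x ∈ f a, ∃ y ∈ f a', G.Adj x y

/-- Planarity, via Wagner's characterization. -/
def IsPlanar {β : Type*} (G : SimpleGraph β) : Prop :=
  ¬ IsMinor (⊤ : SimpleGraph (Fin 5)) G ∧
  ¬ IsMinor (completeBipartiteGraph (Fin 3) (Fin 3)) G

/-- `G` is `t`-apex: deleting at most `t` vertices leaves a planar graph. -/
def IsApex (t : ℕ) {β : Type*} (G : SimpleGraph β) : Prop :=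
  ∃ X : Set β, X.Finite ∧ X.ncard ≤ t ∧ IsPlanar (G.induce Xᶜ)

/-- `G` is `k`-connected. -/
def IsKConnected (k : ℕ) {β : Type*} [Fintype β] (G : SimpleGraph β) : Prop :=
  k < Fintype.card β ∧
  ∀ X : Finset β, X.card < k → (G.induce ((↑X : Set β)ᶜ)).Connected

/-- Vertices of the tree-like product `T(G,H)`: a vertex of the copy `G_x`
is encoded by the path from the root to the non-leaf tree vertex `x`
(a sequence of vertices of `G` of length `< k`) together with a vertex of `G`. -/
abbrev TPVert (V : Type*) (k : ℕ) : Type _ := (Σ i : Fin k, (Fin i → V)) × V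

/-- The tree-like product `T(G,H)` of `G` with a graph `H` on the ordered
vertex set `Fin k`. -/
def treeProd {V : Type*} (G : SimpleGraph V) {k : ℕ} (H : SimpleGraph (Fin k)) :
    SimpleGraph (TPVert V k) :=
  SimpleGraph.fromRel (fun a b =>
    (a.1 = b.1 ∧ G.Adj a.2 b.2) ∨
    (∃ hij : (a.1.1 : ℕ) < (b.1.1 : ℕ),
      (∀ t : Fin a.1.1, a.1.2 t = b.1.2 ⟨t, t.2.trans hij⟩) ∧
      a.2 = b.1.2 ⟨a.1.1, hij⟩ ∧
      H.Adj a.1.1 b.1.1))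

/-- The `p`-blowup of a graph on `Fin m`, with the blowup classes consecutive. -/
def blowupFin {m : ℕ} (H0 : SimpleGraph (Fin m)) (p : ℕ) : SimpleGraph (Fin (m * p)) where
  Adj i j := ∃ (hi : (i : ℕ) / p < m) (hj : (j : ℕ) / p < m),
    H0.Adj ⟨(i : ℕ) / p, hi⟩ ⟨(j : ℕ) / p, hj⟩
  symm := ⟨by rintro i j ⟨hi, hj, h⟩; exact ⟨hj, hi, h.symm⟩⟩
  loopless := ⟨by rintro i ⟨hi, hj, h⟩; exact H0.loopless.irrefl _ h⟩

/-- The strong `p`-blowup of a graph. -/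
def strongBlowup {W : Type*} (H0 : SimpleGraph W) (p : ℕ) : SimpleGraph (W × Fin p) where
  Adj a b := H0.Adj a.1 b.1 ∨ (a.1 = b.1 ∧ a.2 ≠ b.2)
  symm := ⟨by
    rintro a b (h | ⟨h1, h2⟩)
    · exact Or.inl h.symm
    · exact Or.inr ⟨h1.symm, h2.symm⟩⟩
  loopless := ⟨by rintro a (h | ⟨_, h⟩); exact H0.loopless.irrefl _ h; exact h rfl⟩

/-- An `(a : b)`-coloring of `G`. -/
def HasFracColoring {W : Type*} (G : SimpleGraph W) (a b : ℕ) : Prop :=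
  ∃ f : W → Finset (Fin a), (∀ w, (f w).card = b) ∧
    ∀ ⦃x y⦄, G.Adj x y → Disjoint (f x) (f y)

/-- The fractional chromatic number. -/
noncomputable def fracChrom {W : Type*} (G : SimpleGraph W) : ℝ :=
  sInf {q : ℝ | ∃ a b : ℕ, 0 < b ∧ HasFracColoring G a b ∧ q = (a : ℝ) / (b : ℝ)}

/-
Fix a proper colouring of `T(G, H)` with `N` colours and descend the tree greedily. At level `i`
the copy `G_x` at the current node needs at least `p` colours, while fewer than `p` colours occur
at the earlier levels of the same blowup class `S_u`; so some vertex of `G_x` gets a colour new to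
its class, and we continue below it. Along the resulting branch every class `S_u` sees `p`
distinct colours, and two classes `S_u`, `S_u'` with `uu' ∈ E(H_0)` see disjoint sets of colours,
because each vertex of the branch is joined to all its progenitors at levels of adjacent classes.
This is an `(N : p)`-colouring of `H_0`, hence `c = χ_f(H_0) ≤ N / p`.
-/

open Finset

lemma fracChrom_le_div {W : Type*} {G : SimpleGraph W} {a b : ℕ} (hb : 0 < b)
    (h : HasFracColoring G a b) : fracChrom G ≤ a / b :=
  csInf_le ⟨0, by rintro _ ⟨a, b, -, -, rfl⟩; positivity⟩ ⟨a, b, hb, h, rfl⟩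

lemma SimpleGraph.Coloring.exists_apply_notMem_of_card_lt {V α : Type*} {G : SimpleGraph V}
    (C : G.Coloring α) {p : ℕ} (hG : (p : ℕ∞) ≤ G.chromaticNumber) (F : Finset α)
    (hF : #F < p) : ∃ v, C v ∉ F := by
  by_contra! hCF
  have hcol : G.Colorable #F := by
    simpa using (Coloring.mk (fun v => (⟨C v, hCF v⟩ : F))
      fun hab e => C.valid hab (congrArg Subtype.val e)).colorable
  have := hG.trans hcol.chromaticNumber_le
  norm_cast at this
  omega

lemma blowupFin_adj_finProdFinEquiv {m p : ℕ} (H0 : SimpleGraph (Fin m)) {u u' : Fin m}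
    {t t' : Fin p} :
    (blowupFin H0 p).Adj (finProdFinEquiv (u, t)) (finProdFinEquiv (u', t')) ↔ H0.Adj u u' := by
  have hp : 0 < p := t.pos
  have hdiv (u : Fin m) (t : Fin p) : (t + p * u : ℕ) / p = u := by
    rw [Nat.add_mul_div_left _ _ hp, Nat.div_eq_of_lt t.2, zero_add]
  simp only [blowupFin, finProdFinEquiv_apply_val, hdiv]
  exact ⟨fun ⟨_, _, h⟩ => h, fun h => ⟨u.2, u'.2, h⟩⟩

section Branch

variable {V : Type*} {k : ℕ}

/-- The vertex at level `i` of the root-to-leaf branch that descends through the children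
indexed by `w 0, w 1, …`. -/
def branchVertex (w : ℕ → V) (i : Fin k) : TPVert V k :=
  (⟨i, fun t => w t⟩, w i)

lemma branchVertex_congr {w w' : ℕ → V} {i : Fin k} (h : ∀ t ≤ (i : ℕ), w t = w' t) :
    branchVertex w i = branchVertex w' i := by
  simp only [branchVertex, h i le_rfl, funext fun t : Fin i => h t t.2.le]

variable (G : SimpleGraph V) (H : SimpleGraph (Fin k))

def treeProdCopy (x : Σ i : Fin k, Fin i → V) : G →g treeProd G H where
  toFun v := (x, v)
  map_rel' h := by
    rw [treeProd, fromRel_adj]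
    exact ⟨fun e => h.ne (congrArg Prod.snd e), Or.inl (Or.inl ⟨rfl, h⟩)⟩

lemma treeProd_adj_branchVertex (w : ℕ → V) {i j : Fin k} (h : H.Adj i j) :
    (treeProd G H).Adj (branchVertex w i) (branchVertex w j) := by
  wlog hij : i < j generalizing i j
  · exact (this h.symm (lt_of_le_of_ne (not_lt.mp hij) h.ne.symm)).symm
  rw [treeProd, fromRel_adj]
  exact ⟨fun e => hij.ne (Fin.ext (congrArg (fun a => (a.1.1 : ℕ)) e)),
    Or.inl (Or.inr ⟨hij, fun _ => rfl, rfl, h⟩)⟩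

variable {G H} {α β : Type*} [DecidableEq β] {p : ℕ}

lemma exists_branch_injOn_levels_lt_succ (hG : (p : ℕ∞) ≤ G.chromaticNumber)
    (φ : (treeProd G H).Coloring α) (g : Fin k → β) (hg : ∀ b, #{i | g i = b} ≤ p)
    {w : ℕ → V} {n : ℕ} (hn : n < k)
    (hw : Set.InjOn (fun i => (g i, φ (branchVertex w i))) {i | (i : ℕ) < n}) :
    ∃ w' : ℕ → V,
      Set.InjOn (fun i => (g i, φ (branchVertex w' i))) {i | (i : ℕ) < n + 1} := by
  classical
  set i₀ : Fin k := ⟨n, hn⟩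
  set F := image (fun i => φ (branchVertex w i)) {i | (i : ℕ) < n ∧ g i = g i₀}
  have hearlier :
      ({i | (i : ℕ) < n ∧ g i = g i₀} : Finset (Fin k)) ⊂ ({i | g i = g i₀} : Finset _) :=
    (ssubset_iff_of_subset fun i hi => by simp_all).mpr ⟨i₀, by simp, by simp [i₀]⟩
  have hF : #F < p := card_image_le.trans_lt ((card_lt_card hearlier).trans_le (hg _))
  obtain ⟨v, hv⟩ := Coloring.exists_apply_notMem_of_card_lt
    (φ.comp (treeProdCopy G H ⟨i₀, fun t => w t⟩)) hG F hF
  refine ⟨Function.update w n v, ?_⟩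
  have hold (i : Fin k) (hi : (i : ℕ) < n) :
      branchVertex (Function.update w n v) i = branchVertex w i :=
    branchVertex_congr fun t ht => Function.update_of_ne (by omega) _ _
  have hnew : branchVertex (Function.update w n v) i₀ = (⟨i₀, fun t => w t⟩, v) := by
    simp only [branchVertex, i₀, Function.update_self, Prod.mk.injEq, and_true]
    congr 1
    exact funext fun t => Function.update_of_ne t.2.ne _ _
  have hlevels : {i : Fin k | (i : ℕ) < n + 1} = insert i₀ {i : Fin k | (i : ℕ) < n} := by
    ext i
    simp only [Set.mem_ofPred_eq, Set.mem_insert_iff, Fin.ext_iff, i₀]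
    omega
  rw [hlevels, Set.injOn_insert (by simp [i₀])]
  refine ⟨hw.congr fun i hi => by simp [hold i hi], ?_⟩
  rintro ⟨i, hi, e⟩
  simp only [Prod.mk.injEq, hold i hi, hnew] at e
  exact hv (mem_image.mpr ⟨i, mem_filter.mpr ⟨mem_univ _, hi, e.1⟩, e.2⟩)

variable [Nonempty V]

theorem exists_branch_injective (hG : (p : ℕ∞) ≤ G.chromaticNumber)
    (φ : (treeProd G H).Coloring α) (g : Fin k → β) (hg : ∀ b, #{i | g i = b} ≤ p) :
    ∃ w : ℕ → V, Function.Injective fun i => (g i, φ (branchVertex w i)) := by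
  suffices ∀ n ≤ k, ∃ w : ℕ → V,
      Set.InjOn (fun i => (g i, φ (branchVertex w i))) {i | (i : ℕ) < n} by
    obtain ⟨w, hw⟩ := this k le_rfl
    exact ⟨w, Set.injOn_univ.mp (by simpa using hw)⟩
  intro n hn
  induction n with
  | zero => exact ⟨fun _ => Classical.arbitrary V, by simp⟩
  | succ n ih =>
    obtain ⟨w, hw⟩ := ih (by omega)
    exact exists_branch_injOn_levels_lt_succ hG φ g hg (by omega) hw

theorem hasFracColoring_of_colorable_treeProd_blowupFin {m N : ℕ} (H0 : SimpleGraph (Fin m))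
    (hG : (p : ℕ∞) ≤ G.chromaticNumber) (hN : (treeProd G (blowupFin H0 p)).Colorable N) :
    HasFracColoring H0 N p := by
  obtain ⟨φ⟩ := hN
  have hclass (u : Fin m) : #{j | (finProdFinEquiv.symm j).1 = u} ≤ p :=
    (card_le_card_of_injOn (t := univ) (fun j => (finProdFinEquiv.symm j).2)
      (fun _ _ => mem_univ _)
      fun j hj j' hj' e => finProdFinEquiv.symm.injective (Prod.ext (by simp_all) e)).trans
      (card_univ.trans (Fintype.card_fin p)).le
  obtain ⟨w, hw⟩ := exists_branch_injective hG φ _ hclass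
  let color (u : Fin m) (t : Fin p) : Fin N := φ (branchVertex w (finProdFinEquiv (u, t)))
  refine ⟨fun u => univ.image (color u), fun u => ?_, fun u u' huu' => ?_⟩
  · rw [card_image_of_injective _ fun t t' e => ?_, card_univ, Fintype.card_fin]
    simpa using hw (Prod.ext (by simp) e)
  · rw [Finset.disjoint_left]
    rintro _ hx hx'
    obtain ⟨t, -, rfl⟩ := mem_image.mp hx
    obtain ⟨t', -, e⟩ := mem_image.mp hx'
    exact φ.valid (treeProd_adj_branchVertex G _ w
      ((blowupFin_adj_finProdFinEquiv H0).mpr huu')) e.symm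

end Branch

theorem treeProd_blowup_chromatic_ge_general {V : Type}
    (G : SimpleGraph V)
    (p c : ℕ) (hp : 1 ≤ p)
    {m : ℕ} (H0 : SimpleGraph (Fin m))
    (hfchi : fracChrom H0 = (c : ℝ))
    (hG : (p : ℕ∞) ≤ G.chromaticNumber) :
    ((c * p : ℕ) : ℕ∞) ≤ (treeProd G (blowupFin H0 p)).chromaticNumber := by
  have : Nonempty V := not_isEmpty_iff.mp fun _ => by
    rw [chromaticNumber_eq_zero_of_isEmpty, nonpos_iff_eq_zero, Nat.cast_eq_zero] at hG
    omega
  refine le_chromaticNumber_iff_colorable.mpr fun N hN => ?_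
  have hfrac := fracChrom_le_div hp (hasFracColoring_of_colorable_treeProd_blowupFin H0 hG hN)
  rw [hfchi, le_div_iff₀ (by positivity)] at hfrac
  exact_mod_cast hfrac

theorem treeProd_blowup_chromatic_ge {V : Type} [Fintype V] [DecidableEq V]
    (G : SimpleGraph V) (hn : 2 ≤ Fintype.card V)
    (p c : ℕ) (hp : 1 ≤ p) (hc : 1 ≤ c)
    {m : ℕ} (H0 : SimpleGraph (Fin m))
    (hchi : H0.chromaticNumber = c) (hfchi : fracChrom H0 = (c : ℝ))
    (hG : (p : ℕ∞) ≤ G.chromaticNumber) :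
    ((c * p : ℕ) : ℕ∞) ≤ (treeProd G (blowupFin H0 p)).chromaticNumber :=
  treeProd_blowup_chromatic_ge_general G p c hp H0 hfchi hG
end

section
/- Let G_0 be a planar graph with n ≥ 2 vertices, let k_0 be a positive integer, and let G = T(G_0, K_{k_0×4}) be the tree-like product of G_0 with the complete k_0-partite graph with parts of size 4. Then every (4k_0−3)-connected graph that appears as a minor of G is (4k_0−4)-apex. -/
open SimpleGraph

/-!
Let `H` be a graph on `Fin K` in which every edge has an end below `B`, and fix a model of `F`
in `T(G₀, H)`. Every edge leaving the subtree below a node `c` goes to one of the at most `B`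
progenitors of `c` at levels `< B`. Deleting the (at most `B`) vertices of `F` whose branch sets
meet these leaves a connected graph, so if one remaining branch set lies inside the subtree, all
of them do. Descend from the root to a node `c` with this property none of whose children has it
(at the leaves only `B` vertices of `F` would be left). For each child `c u`, some remaining branch
set lies outside its subtree, so none lies inside it, and a remaining branch set reaching into it
must contain the vertex `u` of `G_c`. Hence projecting onto `G_c` keeps the remaining branch sets
disjoint and exhibits `F` minus at most `B` vertices as a minor of the planar graph `G₀`.
For `H = K_{k×4}`, take `B = 4k - 4`: the last part is independent.
-/
namespace SimpleGraph

variable {α β γ : Type*} {A : SimpleGraph α} {G : SimpleGraph β} {G' : SimpleGraph γ}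

lemma Reachable.mem_of_forall_adj_mem {Q : Set β} {x y : β} (h : G.Reachable x y)
    (hQ : ∀ a ∈ Q, ∀ b, G.Adj a b → b ∈ Q) (hx : x ∈ Q) : y ∈ Q := by
  obtain ⟨p⟩ := h
  by_contra hy
  obtain ⟨d, -, hd, hd'⟩ := p.exists_boundary_dart Q hx hy
  exact hd' (hQ _ hd _ d.adj)

lemma subset_or_disjoint_of_connected_induce {s E : Set β} (hs : (G.induce s).Connected)
    (hE : ∀ x ∈ s ∩ E, ∀ y ∈ s, G.Adj x y → y ∈ E) : s ⊆ E ∨ Disjoint s E := by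
  by_contra! h
  obtain ⟨y, hys, hyE⟩ := Set.not_subset.1 h.1
  obtain ⟨x, hxs, hxE⟩ := Set.not_disjoint_iff.1 h.2
  exact hyE <| (hs.preconnected ⟨x, hxs⟩ ⟨y, hys⟩).mem_of_forall_adj_mem (Q := {z : s | z.1 ∈ E})
    (fun a ha b hab => hE a ⟨a.2, ha⟩ b b.2 hab) hxE

lemma Connected.induce_image {s : Set β} (hs : (G.induce s).Connected) (φ : β → γ)
    (hφ : ∀ x ∈ s, ∀ y ∈ s, G.Adj x y → φ x = φ y ∨ G'.Adj (φ x) (φ y)) :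
    (G'.induce (φ '' s)).Connected := by
  set ψ := s.imageFactorization φ
  have hψ : ∀ a b, (G.induce s).Reachable a b → (G'.induce (φ '' s)).Reachable (ψ a) (ψ b) := by
    intro a b hab
    rw [reachable_iff_reflTransGen] at hab ⊢
    refine hab.lift' ψ fun x y hxy => ?_
    show Relation.ReflTransGen _ (ψ x) (ψ y)
    rcases hφ x x.2 y y.2 hxy with h | h
    · rw [show ψ x = ψ y from Subtype.ext h]
    · exact .single h
  obtain ⟨a⟩ := hs.nonempty
  rw [connected_iff_exists_forall_reachable]
  refine ⟨ψ a, fun y => ?_⟩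
  obtain ⟨b, rfl⟩ := Set.imageFactorization_surjective y
  exact hψ a b (hs.preconnected a b)

lemma Connected.induce_biUnion {s : Set α} {g : α → Set β} (hs : (A.induce s).Connected)
    (hg : ∀ a ∈ s, (G.induce (g a)).Connected)
    (hadj : ∀ a ∈ s, ∀ a' ∈ s, A.Adj a a' → ∃ x ∈ g a, ∃ y ∈ g a', G.Adj x y) :
    (G.induce (⋃ a ∈ s, g a)).Connected := by
  set U := ⋃ a ∈ s, g a
  have hgU : ∀ {a}, a ∈ s → g a ⊆ U := fun ha => Set.subset_biUnion_of_mem ha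
  have hreach : ∀ {a} (ha : a ∈ s) {x y} (hx : x ∈ g a) (hy : y ∈ g a),
      (G.induce U).Reachable ⟨x, hgU ha hx⟩ ⟨y, hgU ha hy⟩ := fun ha _ _ hx hy =>
    ((hg _ ha).preconnected ⟨_, hx⟩ ⟨_, hy⟩).map (G.induceHomOfLE (hgU ha)).toHom
  obtain ⟨⟨a₀, ha₀⟩⟩ := hs.nonempty
  obtain ⟨x₀, hx₀⟩ := (hg a₀ ha₀).nonempty
  rw [connected_iff_exists_forall_reachable]
  refine ⟨⟨x₀, hgU ha₀ hx₀⟩, fun ⟨y, hy⟩ => ?_⟩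
  obtain ⟨a, ha, hya⟩ := Set.mem_iUnion₂.1 hy
  let Q : Set s :=
    {a | ∀ y (hy : y ∈ g a), (G.induce U).Reachable ⟨x₀, hgU ha₀ hx₀⟩ ⟨y, hgU a.2 hy⟩}
  have hQ : ∀ a ∈ Q, ∀ a', (A.induce s).Adj a a' → a' ∈ Q := by
    intro a haQ a' haa' z hz
    obtain ⟨x, hx, y, hy, hxy⟩ := hadj a a.2 a' a'.2 haa'
    have hxy' : (G.induce U).Adj ⟨x, hgU a.2 hx⟩ ⟨y, hgU a'.2 hy⟩ := hxy
    exact ((haQ x hx).trans hxy'.reachable).trans (hreach a'.2 hy hz)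
  have ha₀Q : (⟨a₀, ha₀⟩ : s) ∈ Q := fun y hy => hreach ha₀ hx₀ hy
  exact (hs.preconnected _ ⟨a, ha⟩).mem_of_forall_adj_mem hQ ha₀Q y hya

end SimpleGraph

section Minor

variable {α β γ η : Type*} {A : SimpleGraph α} {G : SimpleGraph β} {G' : SimpleGraph γ}
  {C : SimpleGraph η}

structure MinorModel (A : SimpleGraph α) (G : SimpleGraph β) where
  branch : α → Set β
  nonempty : ∀ a, (branch a).Nonempty
  connected : ∀ a, (G.induce (branch a)).Connected
  disjoint : Pairwise fun a a' => Disjoint (branch a) (branch a')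
  adj : ∀ ⦃a a'⦄, A.Adj a a' → ∃ x ∈ branch a, ∃ y ∈ branch a', G.Adj x y

theorem isMinor_iff_nonempty_minorModel : IsMinor A G ↔ Nonempty (MinorModel A G) :=
  ⟨fun ⟨f, hne, hconn, hdisj, hadj⟩ => ⟨⟨f, hne, hconn, fun a a' h => hdisj a a' h, hadj⟩⟩,
    fun ⟨M⟩ => ⟨M.branch, M.nonempty, M.connected, fun _ _ h => M.disjoint h, M.adj⟩⟩

namespace MinorModel

def trans (M : MinorModel A G) (N : MinorModel G C) : MinorModel A C where
  branch a := ⋃ b ∈ M.branch a, N.branch b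
  nonempty a := by
    obtain ⟨b, hb⟩ := M.nonempty a
    obtain ⟨x, hx⟩ := N.nonempty b
    exact ⟨x, Set.mem_biUnion hb hx⟩
  connected a := (M.connected a).induce_biUnion (fun b _ => N.connected b)
    fun _ _ _ _ h => N.adj h
  disjoint a a' h := by
    refine Set.disjoint_iUnion₂_left.2 fun b hb => Set.disjoint_iUnion₂_right.2 fun b' hb' => ?_
    exact N.disjoint fun hbb' => (M.disjoint h).ne_of_mem hb hb' hbb'
  adj a a' h := by
    obtain ⟨b, hb, b', hb', hbb'⟩ := M.adj h
    obtain ⟨x, hx, y, hy, hxy⟩ := N.adj hbb'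
    exact ⟨x, Set.mem_biUnion hb hx, y, Set.mem_biUnion hb' hy, hxy⟩

def restrict (M : MinorModel A G) (s : Set α) : MinorModel (A.induce s) G where
  branch a := M.branch a
  nonempty a := M.nonempty a
  connected a := M.connected a
  disjoint _ _ h := M.disjoint (Subtype.coe_ne_coe.2 h)
  adj _ _ h := M.adj h

def map (M : MinorModel A G) (φ : β → γ)
    (hφ : ∀ a a', ∀ x ∈ M.branch a, ∀ y ∈ M.branch a', G.Adj x y →
      φ x = φ y ∨ G'.Adj (φ x) (φ y))
    (hdisj : Pairwise fun a a' => Disjoint (φ '' M.branch a) (φ '' M.branch a')) :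
    MinorModel A G' where
  branch a := φ '' M.branch a
  nonempty a := (M.nonempty a).image φ
  connected a := (M.connected a).induce_image φ (hφ a a)
  disjoint := hdisj
  adj a a' h := by
    obtain ⟨x, hx, y, hy, hxy⟩ := M.adj h
    refine ⟨φ x, ⟨x, hx, rfl⟩, φ y, ⟨y, hy, rfl⟩, (hφ a a' x hx y hy hxy).resolve_left ?_⟩
    exact (hdisj h.ne).ne_of_mem ⟨x, hx, rfl⟩ ⟨y, hy, rfl⟩

def touching (M : MinorModel A G) (S : Set β) : Set α := {a | (M.branch a ∩ S).Nonempty}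

lemma ncard_touching_le (M : MinorModel A G) {S : Set β} (hS : S.Finite) :
    (M.touching S).ncard ≤ S.ncard := by
  have := hS.to_subtype
  have hpt : ∀ a : M.touching S, (M.branch a ∩ S).Nonempty := fun a => a.2
  refine Nat.card_le_card_of_injective (fun a => ⟨(hpt a).some, (hpt a).some_mem.2⟩)
    fun a a' h => ?_
  by_contra hne
  exact (M.disjoint (Subtype.coe_ne_coe.2 hne)).ne_of_mem (hpt a).some_mem.1 (hpt a').some_mem.1
    (congrArg Subtype.val h)

end MinorModel

lemma IsMinor.trans (hAG : IsMinor A G) (hGC : IsMinor G C) : IsMinor A C := by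
  rw [isMinor_iff_nonempty_minorModel] at *
  obtain ⟨M⟩ := hAG
  obtain ⟨N⟩ := hGC
  exact ⟨M.trans N⟩

lemma IsPlanar.of_isMinor (hG : IsPlanar G) (h : IsMinor A G) : IsPlanar A :=
  ⟨fun hK5 => hG.1 (hK5.trans h), fun hK33 => hG.2 (hK33.trans h)⟩

end Minor

namespace TPVert

variable {V : Type*} {K B : ℕ} {a b : TPVert V K} {c : List V}

/-- The root-to-`x` path of the copy `G_x` containing `b`. -/
def path (b : TPVert V K) : List V := List.ofFn b.1.2

/-- The path of the child `θ_x(b)`; so `a` is a progenitor of `b` iff `a.addr <+: b.path`. -/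
def addr (b : TPVert V K) : List V := b.path ++ [b.2]

@[simp] lemma length_path (b : TPVert V K) : b.path.length = b.1.1 := List.length_ofFn

@[simp] lemma length_addr (b : TPVert V K) : b.addr.length = b.1.1 + 1 := by simp [addr]

lemma path_prefix_addr (b : TPVert V K) : b.path <+: b.addr := List.prefix_append _ _

lemma addr_injective : Function.Injective (addr : TPVert V K → List V) := by
  rintro ⟨⟨i, p⟩, v⟩ ⟨⟨i', p'⟩, v'⟩ h
  obtain ⟨hp, hv⟩ := List.append_inj' h rfl
  obtain ⟨hi, hpp'⟩ := Sigma.mk.inj_iff.1 (List.ofFn_inj'.1 hp)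
  obtain rfl := Fin.ext hi
  obtain rfl := eq_of_heq hpp'
  simp_all

def subtree (c : List V) : Set (TPVert V K) := {b | c <+: b.path}

def progenitorsBelow (B : ℕ) (c : List V) : Set (TPVert V K) :=
  {b | (b.1.1 : ℕ) < B ∧ b.addr <+: c}

/-- For `b` below the node `x` at depth `j`, the vertex of `G_x` that `b` hangs from
(`b.2` itself when `b ∈ G_x`). -/
def proj (j : ℕ) (b : TPVert V K) : V := b.path.getD j b.2

lemma subtree_nil : subtree [] = (Set.univ : Set (TPVert V K)) :=
  Set.eq_univ_of_forall fun _ => List.nil_prefix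

lemma subtree_eq_empty (hc : K ≤ c.length) : subtree c = (∅ : Set (TPVert V K)) :=
  Set.eq_empty_of_forall_notMem fun b hb => by
    have := hb.length_le
    simp only [length_path] at this
    omega

lemma notMem_progenitorsBelow (hb : b ∈ subtree c) : b ∉ progenitorsBelow B c := fun h => by
  have := (h.2.trans hb).length_le
  simp at this

lemma mem_progenitorsBelow_append_singleton {u : V} (hb : b ∈ progenitorsBelow B (c ++ [u])) :
    b ∈ progenitorsBelow B c ∨ b.addr = c ++ [u] :=
  (List.prefix_concat_iff.1 hb.2).symm.imp (fun h => ⟨hb.1, h⟩) id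

lemma injOn_level_progenitorsBelow :
    Set.InjOn (fun b : TPVert V K => (b.1.1 : ℕ)) (progenitorsBelow B c) := fun a ha b hb h =>
  addr_injective <| (List.prefix_of_prefix_length_le ha.2 hb.2 (by simp [h])).eq_of_length
    (by simp [h])

lemma ncard_progenitorsBelow_le : (progenitorsBelow B c : Set (TPVert V K)).ncard ≤ B := by
  simpa using Set.ncard_le_ncard_of_injOn _ (fun b hb => Set.mem_Iio.2 hb.1)
    injOn_level_progenitorsBelow (Set.finite_Iio B)

lemma progenitorsBelow_finite : (progenitorsBelow B c : Set (TPVert V K)).Finite :=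
  Set.Finite.of_finite_image ((Set.finite_Iio B).subset (Set.image_subset_iff.2 fun _ hb => hb.1))
    injOn_level_progenitorsBelow

lemma append_proj_prefix_addr (hb : b ∈ subtree c) : c ++ [b.proj c.length] <+: b.addr := by
  rcases hb.length_le.lt_or_eq with hlt | heq
  · have htake : c ++ [b.path[c.length]] = b.path.take (c.length + 1) := by
      rw [← List.take_concat_get' _ _ hlt]
      exact congrArg (· ++ _) (List.prefix_iff_eq_take.1 hb)
    rw [proj, List.getD_eq_getElem _ _ hlt, htake]
    exact (List.take_prefix _ _).trans b.path_prefix_addr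
  · obtain rfl := hb.eq_of_length heq
    rw [proj, List.getD_eq_default _ _ le_rfl]
    exact List.prefix_rfl

lemma addr_prefix_path_of_lt (hlt : (a.1.1 : ℕ) < b.1.1)
    (hpath : ∀ t : Fin a.1.1, a.1.2 t = b.1.2 ⟨t, t.2.trans hlt⟩)
    (hval : a.2 = b.1.2 ⟨a.1.1, hlt⟩) : a.addr <+: b.path := by
  refine List.prefix_iff_getElem.2 ⟨by simpa using hlt, fun i hi => ?_⟩
  simp only [addr, path, List.getElem_append, List.getElem_ofFn]
  split_ifs with h
  · simpa using hpath ⟨i, by simpa using h⟩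
  · simp only [length_addr] at hi
    simp only [List.length_ofFn] at h
    simp [hval, show i = a.1.1 by omega]

end TPVert

lemma List.eq_of_append_singleton_prefix {α : Type*} {c l : List α} {u u' : α}
    (h : c ++ [u] <+: l) (h' : c ++ [u'] <+: l) : u = u' := by
  simpa using (List.prefix_of_prefix_length_le h h' (by simp)).eq_of_length (by simp)

section TreeProd

open TPVert

variable {V : Type*} {K B : ℕ} {G : SimpleGraph V} {H : SimpleGraph (Fin K)} {a b : TPVert V K}
  {c : List V}

lemma treeProd_adj_cases (h : (treeProd G H).Adj a b) :
    (a.path = b.path ∧ G.Adj a.2 b.2) ∨ (a.addr <+: b.path ∧ H.Adj a.1.1 b.1.1) ∨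
      (b.addr <+: a.path ∧ H.Adj b.1.1 a.1.1) := by
  rw [treeProd, SimpleGraph.fromRel_adj] at h
  obtain ⟨-, (⟨hab, hG⟩ | ⟨hlt, hpath, hval, hH⟩) | (⟨hba, hG⟩ | ⟨hlt, hpath, hval, hH⟩)⟩ := h
  · exact .inl ⟨by rw [path, path, hab], hG⟩
  · exact .inr (.inl ⟨addr_prefix_path_of_lt hlt hpath hval, hH⟩)
  · exact .inl ⟨by rw [path, path, hba], hG.symm⟩
  · exact .inr (.inr ⟨addr_prefix_path_of_lt hlt hpath hval, hH⟩)

/-- An edge leaving the subtree joins levels `i < l` of `H`, so `i < B`. -/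
lemma treeProd_mem_subtree_or_of_adj
    (hHB : ∀ i l : Fin K, H.Adj i l → (i : ℕ) < B ∨ (l : ℕ) < B)
    (hb : b ∈ subtree c) (h : (treeProd G H).Adj a b) :
    a ∈ subtree c ∨ a ∈ progenitorsBelow B c := by
  rcases treeProd_adj_cases h with ⟨hab, -⟩ | ⟨hab, hH⟩ | ⟨hba, -⟩
  · exact .inl (show c <+: a.path from hab ▸ hb)
  · have hc := hb.length_le
    simp only [length_path] at hc
    rcases le_or_gt c.length a.1.1 with hle | hlt
    · exact .inl (List.prefix_of_prefix_length_le hb (a.path_prefix_addr.trans hab) (by simpa))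
    · refine .inr ⟨?_, List.prefix_of_prefix_length_le hab hb (by simpa)⟩
      rcases hHB _ _ hH with h | h <;> omega
  · exact .inl (hb.trans (b.path_prefix_addr.trans hba))

lemma treeProd_adj_proj (ha : a ∈ subtree c) (hb : b ∈ subtree c)
    (h : (treeProd G H).Adj a b) :
    a.proj c.length = b.proj c.length ∨ G.Adj (a.proj c.length) (b.proj c.length) := by
  rcases treeProd_adj_cases h with ⟨hab, hG⟩ | ⟨hab, -⟩ | ⟨hba, -⟩
  · by_cases hlt : c.length < a.path.length
    · left
      rw [proj, proj, hab, List.getD_eq_getElem _ _ (hab ▸ hlt), List.getD_eq_getElem]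
    · right
      rw [proj, proj, List.getD_eq_default _ _ (not_lt.1 hlt),
        List.getD_eq_default _ _ (hab ▸ not_lt.1 hlt)]
      exact hG
  · exact .inl <| List.eq_of_append_singleton_prefix
      ((append_proj_prefix_addr ha).trans (hab.trans b.path_prefix_addr))
      (append_proj_prefix_addr hb)
  · exact .inl <| List.eq_of_append_singleton_prefix (append_proj_prefix_addr ha)
      ((append_proj_prefix_addr hb).trans (hba.trans a.path_prefix_addr))

end TreeProd

namespace MinorModel

open TPVert

variable {V W : Type*} {K B : ℕ} {G0 : SimpleGraph V} {H : SimpleGraph (Fin K)}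
  {F : SimpleGraph W} (M : MinorModel F (treeProd G0 H)) {c : List V}

def LivesBelow (B : ℕ) (c : List V) : Prop :=
  ∀ w, M.branch w ⊆ subtree c ∨ w ∈ M.touching (progenitorsBelow B c)

lemma livesBelow_nil : M.LivesBelow B [] := fun _ => .inl (subtree_nil ▸ Set.subset_univ _)

lemma ncard_touching_progenitorsBelow_le :
    (M.touching (progenitorsBelow B c)).ncard ≤ B :=
  (M.ncard_touching_le progenitorsBelow_finite).trans ncard_progenitorsBelow_le

lemma not_livesBelow_of_length_le [Fintype W] (hW : B < Fintype.card W)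
    (hc : K ≤ c.length) : ¬ M.LivesBelow B c := by
  intro h
  have huniv : M.touching (progenitorsBelow B c) = Set.univ := by
    refine Set.eq_univ_of_forall fun w => (h w).resolve_left fun hw => ?_
    obtain ⟨x, hx⟩ := M.nonempty w
    simpa [subtree_eq_empty hc] using hw hx
  have := M.ncard_touching_progenitorsBelow_le (B := B) (c := c)
  rw [huniv, Set.ncard_univ, Nat.card_eq_fintype_card] at this
  omega

variable (hHB : ∀ i l : Fin K, H.Adj i l → (i : ℕ) < B ∨ (l : ℕ) < B)
include hHB

lemma branch_subset_or_disjoint_subtree {w : W} (hw : w ∉ M.touching (progenitorsBelow B c)) :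
    M.branch w ⊆ subtree c ∨ Disjoint (M.branch w) (subtree c) :=
  subset_or_disjoint_of_connected_induce (M.connected w) fun _ hx y hy hxy =>
    (treeProd_mem_subtree_or_of_adj hHB hx.2 hxy.symm).resolve_right fun hS => hw ⟨y, hy, hS⟩

lemma livesBelow_of_branch_subset_subtree [Fintype W] (hconn : IsKConnected (B + 1) F)
    {w₀ : W} (hw₀ : M.branch w₀ ⊆ subtree c) : M.LivesBelow B c := by
  set P := M.touching (progenitorsBelow B c)
  have hP : P.Finite := Set.toFinite P
  have hFP : (F.induce Pᶜ).Connected := by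
    have := hconn.2 hP.toFinset (by
      rw [← Set.ncard_eq_toFinset_card P hP]
      exact Nat.lt_succ_of_le M.ncard_touching_progenitorsBelow_le)
    rwa [hP.coe_toFinset] at this
  have hw₀P : w₀ ∉ P := fun ⟨x, hx, hS⟩ => notMem_progenitorsBelow (hw₀ hx) hS
  intro w
  by_cases hwP : w ∈ P
  · exact .inr hwP
  refine .inl <| (hFP.preconnected ⟨w₀, hw₀P⟩ ⟨w, hwP⟩).mem_of_forall_adj_mem
    (Q := {z : ↥Pᶜ | M.branch z ⊆ subtree c}) (fun z hz z' hzz' => ?_) hw₀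
  obtain ⟨x, hx, y, hy, hxy⟩ := M.adj hzz'
  refine (M.branch_subset_or_disjoint_subtree hHB z'.2).resolve_right fun hdisj => ?_
  rcases treeProd_mem_subtree_or_of_adj hHB (hz hx) hxy.symm with h | h
  · exact hdisj.ne_of_mem hy h rfl
  · exact z'.2 ⟨y, hy, h⟩

lemma exists_mem_branch_addr_eq [Fintype W] (hconn : IsKConnected (B + 1) F)
    (hnext : ∀ u, ¬ M.LivesBelow B (c ++ [u])) {w : W}
    (hw : w ∉ M.touching (progenitorsBelow B c)) {b : TPVert V K} (hb : b ∈ M.branch w)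
    (hbc : b ∈ subtree c) : ∃ x ∈ M.branch w, x.addr = c ++ [b.proj c.length] := by
  rcases List.prefix_concat_iff.1 (append_proj_prefix_addr hbc) with h | h
  · exact ⟨b, hb, h.symm⟩
  have hw' : w ∈ M.touching (progenitorsBelow B (c ++ [b.proj c.length])) := by
    by_contra hw'
    rcases M.branch_subset_or_disjoint_subtree hHB hw' with hsub | hdisj
    · exact hnext _ (M.livesBelow_of_branch_subset_subtree hHB hconn hsub)
    · exact hdisj.ne_of_mem hb h rfl
  obtain ⟨x, hx, hxS⟩ := hw'
  exact (mem_progenitorsBelow_append_singleton hxS).elim (fun h => absurd ⟨x, hx, h⟩ hw)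
    fun h => ⟨x, hx, h⟩

lemma isApex_of_livesBelow [Fintype W] (hconn : IsKConnected (B + 1) F)
    (hplanar : IsPlanar G0) (hc : M.LivesBelow B c)
    (hnext : ∀ u, ¬ M.LivesBelow B (c ++ [u])) : IsApex B F := by
  set P := M.touching (progenitorsBelow B c)
  have hsub : ∀ z : ↥Pᶜ, M.branch z ⊆ subtree c := fun z => (hc z).resolve_right z.2
  have hdisj : Pairwise fun z z' : ↥Pᶜ =>
      Disjoint (proj c.length '' M.branch z) (proj c.length '' M.branch z') := by
    intro z z' hne
    rw [Set.disjoint_left]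
    rintro _ ⟨x, hx, rfl⟩ ⟨y, hy, hxy⟩
    obtain ⟨x', hx', hx'c⟩ := M.exists_mem_branch_addr_eq hHB hconn hnext z.2 hx (hsub z hx)
    obtain ⟨y', hy', hy'c⟩ := M.exists_mem_branch_addr_eq hHB hconn hnext z'.2 hy (hsub z' hy)
    exact (M.disjoint (Subtype.coe_ne_coe.2 hne)).ne_of_mem hx' hy'
      (addr_injective (by rw [hx'c, hy'c, hxy]))
  let N : MinorModel (F.induce Pᶜ) G0 := (M.restrict Pᶜ).map (proj c.length)
    (fun z z' _ hx _ hy hxy => treeProd_adj_proj (hsub z hx) (hsub z' hy) hxy) hdisj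
  exact ⟨P, Set.toFinite P, M.ncard_touching_progenitorsBelow_le,
    hplanar.of_isMinor (isMinor_iff_nonempty_minorModel.2 ⟨N⟩)⟩

end MinorModel

theorem isApex_of_isMinor_treeProd {V W : Type*} [Fintype W] {K B : ℕ} {G0 : SimpleGraph V}
    {H : SimpleGraph (Fin K)} {F : SimpleGraph W}
    (hHB : ∀ i l : Fin K, H.Adj i l → (i : ℕ) < B ∨ (l : ℕ) < B) (hplanar : IsPlanar G0)
    (hminor : IsMinor F (treeProd G0 H)) (hconn : IsKConnected (B + 1) F) : IsApex B F := by
  obtain ⟨M⟩ := isMinor_iff_nonempty_minorModel.1 hminor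
  suffices ∀ m (c : List V), c.length + m = K → M.LivesBelow B c → IsApex B F from
    this K [] (by simp) M.livesBelow_nil
  intro m
  induction m with
  | zero =>
    exact fun c hc h => absurd h (M.not_livesBelow_of_length_le (by have := hconn.1; omega) hc.ge)
  | succ m ih =>
    intro c hc h
    by_cases hnext : ∃ u, M.LivesBelow B (c ++ [u])
    · obtain ⟨u, hu⟩ := hnext
      exact ih (c ++ [u]) (by rw [List.length_append, List.length_singleton]; omega) hu
    · exact M.isApex_of_livesBelow hHB hconn hplanar h (not_exists.1 hnext)

lemma blowupFin_top_adj {m p : ℕ} {i l : Fin (m * p)}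
    (h : (blowupFin (⊤ : SimpleGraph (Fin m)) p).Adj i l) :
    (i : ℕ) < (m - 1) * p ∨ (l : ℕ) < (m - 1) * p := by
  obtain ⟨hi, hl, hne⟩ := h
  have hne : (i : ℕ) / p ≠ l / p := fun h => hne (Fin.ext h)
  by_contra! hge
  have hp : 0 < p := Nat.pos_of_ne_zero fun hp => hne (by simp [hp])
  have hi' := Nat.div_le_div_right (c := p) hge.1
  have hl' := Nat.div_le_div_right (c := p) hge.2
  rw [Nat.mul_div_cancel _ hp] at hi' hl'
  omega

theorem treeProd_planar_minor_apex_general {V : Type}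
    (G0 : SimpleGraph V) (hplanar : IsPlanar G0)
    (k0 : ℕ) (hk0 : 1 ≤ k0)
    {W : Type} [Fintype W] (F : SimpleGraph W)
    (hminor : IsMinor F (treeProd G0 (blowupFin (⊤ : SimpleGraph (Fin k0)) 4)))
    (hconn : IsKConnected (4 * k0 - 3) F) :
    IsApex (4 * k0 - 4) F := by
  rw [show 4 * k0 - 3 = (k0 - 1) * 4 + 1 by omega] at hconn
  rw [show 4 * k0 - 4 = (k0 - 1) * 4 by omega]
  exact isApex_of_isMinor_treeProd (fun _ _ => blowupFin_top_adj) hplanar hminor hconn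

theorem treeProd_planar_minor_apex {V : Type} [Fintype V] [DecidableEq V]
    (G0 : SimpleGraph V) (hplanar : IsPlanar G0) (hn : 2 ≤ Fintype.card V)
    (k0 : ℕ) (hk0 : 1 ≤ k0)
    {W : Type} [Fintype W] (F : SimpleGraph W)
    (hminor : IsMinor F (treeProd G0 (blowupFin (⊤ : SimpleGraph (Fin k0)) 4)))
    (hconn : IsKConnected (4 * k0 - 3) F) :
    IsApex (4 * k0 - 4) F :=
  treeProd_planar_minor_apex_general G0 hplanar k0 hk0 F hminor hconn
end
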